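/- (Duality-type estimate.) For every x ∈ ℝ^n one has ‖(I − P_K) x‖₂ ≤ η_K · ‖(I − P_K) x‖_A. -/

import Mathlib

/-!
The error `e = (I - P) x` is `A`-orthogonal to `K`, and so is `P (A⁻¹ e) ∈ K`; hence
`‖e‖₂² = (e, A⁻¹ e)_A = (e, (I - P) A⁻¹ e)_A ≤ ‖e‖_A · η_K ‖e‖₂` by Cauchy–Schwarz for the energy
inner product and the homogeneity of `g ↦ ‖(I - P) A⁻¹ g‖_A`, whose supremum over the compact unit
sphere is `η_K`. Dividing by `‖e‖₂` gives the estimate.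
-/

open Matrix

/-- The Euclidean (`L²`) norm on `ℝⁿ`: `‖x‖₂ = √(xᵀx)`. -/
noncomputable def l2N {n : ℕ} (x : Fin n → ℝ) : ℝ := Real.sqrt (x ⬝ᵥ x)

/-- The energy norm induced by the matrix `A`: `‖x‖_A = √(xᵀAx)`. -/
noncomputable def aN {n : ℕ} (A : Matrix (Fin n) (Fin n) ℝ) (x : Fin n → ℝ) : ℝ :=
  Real.sqrt (x ⬝ᵥ (A *ᵥ x))

/-- `η_K = sup_{‖g‖₂ = 1} ‖(I - P_K) A⁻¹ g‖_A`, where `P` is the `A`-orthogonal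
projection onto the subspace `K`. -/
noncomputable def etaK {n : ℕ} (A : Matrix (Fin n) (Fin n) ℝ)
    (P : (Fin n → ℝ) →ₗ[ℝ] (Fin n → ℝ)) : ℝ :=
  sSup ((fun g => aN A ((A⁻¹ *ᵥ g) - P (A⁻¹ *ᵥ g))) '' {g | l2N g = 1})

section EuclideanNorm

variable {n : ℕ}

lemma l2N_eq_norm (x : Fin n → ℝ) : l2N x = ‖(WithLp.toLp 2 x : EuclideanSpace ℝ (Fin n))‖ := by
  simp only [l2N, EuclideanSpace.norm_eq, Real.norm_eq_abs, sq, abs_mul_abs_self, dotProduct]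

lemma l2N_sq (x : Fin n → ℝ) : l2N x ^ 2 = x ⬝ᵥ x :=
  Real.sq_sqrt (dotProduct_self_star_nonneg x)

lemma l2N_smul (c : ℝ) (x : Fin n → ℝ) : l2N (c • x) = |c| * l2N x := by
  rw [l2N_eq_norm, l2N_eq_norm, WithLp.toLp_smul, norm_smul, Real.norm_eq_abs]

lemma isCompact_l2N_sphere : IsCompact {g : Fin n → ℝ | l2N g = 1} := by
  have hsphere : {g : Fin n → ℝ | l2N g = 1} =
      WithLp.ofLp '' Metric.sphere (0 : EuclideanSpace ℝ (Fin n)) 1 := by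
    ext g
    refine ⟨fun hg => ⟨WithLp.toLp 2 g, by simpa [l2N_eq_norm] using hg, rfl⟩, ?_⟩
    rintro ⟨v, hv, rfl⟩
    simpa [l2N_eq_norm] using hv
  rw [hsphere]
  exact (isCompact_sphere 0 1).image (PiLp.continuous_ofLp 2 _)

lemma le_sSup_image_l2N_sphere_mul {f : (Fin n → ℝ) → ℝ} (hf : Continuous f)
    (hf_smul : ∀ (c : ℝ) g, f (c • g) = |c| * f g) (g : Fin n → ℝ) :
    f g ≤ sSup (f '' {g | l2N g = 1}) * l2N g := by
  rcases (norm_nonneg (WithLp.toLp 2 g : EuclideanSpace ℝ (Fin n))).eq_or_lt with hg | hg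
  · have hg0 : g = 0 := by simpa using hg.symm
    have hf0 : f 0 = 0 := by simpa using hf_smul 0 0
    simp [hg0, hf0, l2N]
  · rw [← l2N_eq_norm] at hg
    have hunit : l2N ((l2N g)⁻¹ • g) = 1 := by
      rw [l2N_smul, abs_inv, abs_of_pos hg, inv_mul_cancel₀ hg.ne']
    have hle : f ((l2N g)⁻¹ • g) ≤ sSup (f '' {g | l2N g = 1}) :=
      le_csSup ((isCompact_l2N_sphere.image hf).bddAbove) ⟨_, hunit, rfl⟩
    rw [hf_smul, abs_inv, abs_of_pos hg] at hle
    rwa [inv_mul_le_iff₀ hg, mul_comm] at hle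

end EuclideanNorm

section EnergyNorm

variable {n : ℕ} (A : Matrix (Fin n) (Fin n) ℝ)

lemma aN_smul (c : ℝ) (x : Fin n → ℝ) : aN A (c • x) = |c| * aN A x := by
  rw [aN, mulVec_smul, dotProduct_smul, smul_dotProduct, smul_eq_mul, smul_eq_mul, ← mul_assoc,
    ← sq, Real.sqrt_mul (sq_nonneg c), Real.sqrt_sq_eq_abs, aN]

lemma continuous_aN : Continuous (aN A) := by
  unfold aN
  fun_prop

lemma Matrix.IsSymm.dotProduct_mulVec_comm {ι R : Type*} [Fintype ι] [CommSemiring R]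
    {M : Matrix ι ι R} (hM : M.IsSymm) (x y : ι → R) :
    x ⬝ᵥ (M *ᵥ y) = y ⬝ᵥ (M *ᵥ x) := by
  rw [dotProduct_mulVec, ← mulVec_transpose, hM.eq, dotProduct_comm]

variable {A}

lemma dotProduct_mulVec_le_aN_mul_aN (hA : A.PosSemidef) (x y : Fin n → ℝ) :
    x ⬝ᵥ (A *ᵥ y) ≤ aN A x * aN A y := by
  have hsymm : A.IsSymm := isHermitian_iff_isSymm.mp hA.isHermitian
  have hnonneg (v : Fin n → ℝ) : 0 ≤ v ⬝ᵥ (A *ᵥ v) := by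
    simpa using hA.dotProduct_mulVec_nonneg v
  have hcs := LinearMap.BilinForm.apply_mul_apply_le_of_forall_zero_le (Matrix.toLinearMap₂' ℝ A)
    (by simpa [Matrix.toLinearMap₂'_apply'] using hnonneg) x y
  simp only [Matrix.toLinearMap₂'_apply', hsymm.dotProduct_mulVec_comm y x] at hcs
  calc x ⬝ᵥ (A *ᵥ y) ≤ |x ⬝ᵥ (A *ᵥ y)| := le_abs_self _
    _ ≤ √((x ⬝ᵥ (A *ᵥ x)) * (y ⬝ᵥ (A *ᵥ y))) := Real.abs_le_sqrt (by rwa [sq])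
    _ = aN A x * aN A y := Real.sqrt_mul (hnonneg x) _

end EnergyNorm

section Galerkin

variable {n : ℕ} (A : Matrix (Fin n) (Fin n) ℝ) (P : (Fin n → ℝ) →ₗ[ℝ] (Fin n → ℝ))

lemma etaK_nonneg : 0 ≤ etaK A P :=
  Real.sSup_nonneg fun _ ⟨_, _, h⟩ => h ▸ Real.sqrt_nonneg _

lemma aN_sub_le_etaK_mul_l2N (g : Fin n → ℝ) :
    aN A (A⁻¹ *ᵥ g - P (A⁻¹ *ᵥ g)) ≤ etaK A P * l2N g := by
  refine le_sSup_image_l2N_sphere_mul (f := fun g => aN A (A⁻¹ *ᵥ g - P (A⁻¹ *ᵥ g))) ?_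
    (fun c g => ?_) g
  · have hP := P.continuous_of_finiteDimensional
    exact (continuous_aN A).comp (by fun_prop)
  · rw [mulVec_smul, map_smul, ← smul_sub, aN_smul]

lemma galerkin_orthogonality {K : Submodule ℝ (Fin n → ℝ)}
    (hPproj : ∀ x, ∀ y ∈ K, (P x) ⬝ᵥ (A *ᵥ y) = x ⬝ᵥ (A *ᵥ y)) (x : Fin n → ℝ) :
    ∀ y ∈ K, (x - P x) ⬝ᵥ (A *ᵥ y) = 0 := fun y hy => by
  rw [sub_dotProduct, hPproj x y hy, sub_self]

end Galerkin

/-- Duality-type estimate (3.12): for every `x ∈ ℝⁿ`,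
`‖(I − P_K) x‖₂ ≤ η_K ‖(I − P_K) x‖_A`. -/
theorem stmt9 {n : ℕ} (A : Matrix (Fin n) (Fin n) ℝ) (hA : A.PosDef)
    (K : Submodule ℝ (Fin n → ℝ))
    -- `P` is the `A`-orthogonal (Galerkin) projection onto `K`
    (P : (Fin n → ℝ) →ₗ[ℝ] (Fin n → ℝ))
    (hPmem : ∀ x, P x ∈ K)
    (hPproj : ∀ x, ∀ y ∈ K, (P x) ⬝ᵥ (A *ᵥ y) = x ⬝ᵥ (A *ᵥ y)) :
    ∀ x : Fin n → ℝ, l2N (x - P x) ≤ etaK A P * aN A (x - P x) := by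
  intro x
  set e := x - P x
  have horth : ∀ y ∈ K, e ⬝ᵥ (A *ᵥ y) = 0 := galerkin_orthogonality A P hPproj x
  clear_value e
  set z := A⁻¹ *ᵥ e - P (A⁻¹ *ᵥ e)
  have hdual : l2N e ^ 2 = e ⬝ᵥ (A *ᵥ z) := by
    have hAinv : A *ᵥ (A⁻¹ *ᵥ e) = e := by
      rw [mulVec_mulVec, mul_nonsing_inv A ((isUnit_iff_isUnit_det A).mp hA.isUnit),
        one_mulVec]
    rw [l2N_sq, mulVec_sub, hAinv, dotProduct_sub, horth _ (hPmem _), sub_zero]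
  have hbound : l2N e ^ 2 ≤ etaK A P * aN A e * l2N e :=
    calc l2N e ^ 2 = e ⬝ᵥ (A *ᵥ z) := hdual
      _ ≤ aN A e * aN A z := dotProduct_mulVec_le_aN_mul_aN hA.posSemidef e z
      _ ≤ aN A e * (etaK A P * l2N e) := by
        gcongr
        · exact Real.sqrt_nonneg _
        · exact aN_sub_le_etaK_mul_l2N A P e
      _ = etaK A P * aN A e * l2N e := by ring
  have hnonneg : 0 ≤ l2N e := Real.sqrt_nonneg _
  rcases hnonneg.eq_or_lt with he | he
  · rw [← he]
    exact mul_nonneg (etaK_nonneg A P) (Real.sqrt_nonneg _)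
  · exact le_of_mul_le_mul_right (by rwa [sq] at hbound) he
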